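/- Let g be a carcass map which is topologically conjugated to the tent map via a piecewise linear conjugacy, and let x₀ ∈ (0,1) be the positive fixed point of g. Then the right derivative of g at 0 equals 2, and the product of the left derivative and the right derivative of g at x₀ equals 4. -/

import Mathlib

open Set

/-- The tent map: `f(x) = 2x` for `x ≤ 1/2` and `f(x) = 2 - 2x` for `x ≥ 1/2`. -/
noncomputable def tent (x : ℝ) : ℝ := min (2 * x) (2 - 2 * x)

/-- A unimodal map of `[0,1]`. -/
def IsUnimodal (g : ℝ → ℝ) : Prop :=
  ContinuousOn g (Icc 0 1) ∧ MapsTo g (Icc 0 1) (Icc 0 1) ∧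
  ∃ v ∈ Ioo (0:ℝ) 1, StrictMonoOn g (Icc 0 v) ∧ StrictAntiOn g (Icc v 1) ∧
    g 0 = 0 ∧ g 1 = 0 ∧ g v = 1

/-- `g` is piecewise linear (affine) on `[a,b]`. -/
def IsPLOn (g : ℝ → ℝ) (a b : ℝ) : Prop :=
  ∃ (n : ℕ) (p : ℕ → ℝ), 0 < n ∧ p 0 = a ∧ p n = b ∧
    (∀ i < n, p i < p (i + 1)) ∧
    ∀ i < n, ∃ c d : ℝ, ∀ x ∈ Icc (p i) (p (i + 1)), g x = c * x + d

/-- A carcass map: a piecewise linear unimodal map. -/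
def IsCarcass (g : ℝ → ℝ) : Prop := IsUnimodal g ∧ IsPLOn g 0 1

/-- `g^{-n}(0)`, the set of points of `[0,1]` mapped to `0` by the `n`-th iterate. -/
def preimZero (g : ℝ → ℝ) (n : ℕ) : Set ℝ := {x ∈ Icc (0:ℝ) 1 | g^[n] x = 0}

/-- The complete pre-image of `0` under `g`. -/
def completePreimZero (g : ℝ → ℝ) : Set ℝ := ⋃ n ∈ {n : ℕ | 1 ≤ n}, preimZero g n

/-- A homeomorphism of `[0,1]` onto itself (a continuous bijection of the compact
interval `[0,1]`, whose inverse is then automatically continuous). -/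
def IsHomeoI (h : ℝ → ℝ) : Prop :=
  ContinuousOn h (Icc 0 1) ∧ BijOn h (Icc 0 1) (Icc 0 1)

/-- `h` is a topological conjugacy from the tent map to `g`, i.e. a homeomorphism of
`[0,1]` with `h 0 = 0` and `h ∘ f = g ∘ h`. -/
def ConjTent (g h : ℝ → ℝ) : Prop :=
  IsHomeoI h ∧ h 0 = 0 ∧ ∀ x ∈ Icc (0:ℝ) 1, h (tent x) = g (h x)

/-- A kink of a (piecewise linear) map: an interior point where it is not differentiable. -/
def IsKink (g : ℝ → ℝ) (x : ℝ) : Prop := x ∈ Ioo (0:ℝ) 1 ∧ ¬ DifferentiableAt ℝ g x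

/-- A firm carcass map: a carcass map all of whose kinks are in the complete
pre-image of `0`. -/
def IsFirm (g : ℝ → ℝ) : Prop := IsCarcass g ∧ ∀ x, IsKink g x → x ∈ completePreimZero g

/-- A self-semiconjugation of `g`: a continuous surjective map `ψ : [0,1] → [0,1]`
with `ψ ∘ g = g ∘ ψ`. -/
def IsSelfSemiconj (g ψ : ℝ → ℝ) : Prop :=
  ContinuousOn ψ (Icc 0 1) ∧ MapsTo ψ (Icc 0 1) (Icc 0 1) ∧ SurjOn ψ (Icc 0 1) (Icc 0 1) ∧
  ∀ x ∈ Icc (0:ℝ) 1, ψ (g x) = g (ψ x)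

/-- The map `ξ_t(x) = (1 - (-1)^⌊tx⌋)/2 + (-1)^⌊tx⌋ · {tx}`. -/
noncomputable def xi (t : ℕ) (x : ℝ) : ℝ :=
  (1 - (-1 : ℝ) ^ ⌊(t : ℝ) * x⌋) / 2 + (-1 : ℝ) ^ ⌊(t : ℝ) * x⌋ * Int.fract ((t : ℝ) * x)

/-- `μ` enumerates, for each `n ≥ 1`, the set `g^{-n}(0)` in increasing order as
`μ n 0 < μ n 1 < … < μ n 2^{n-1}`. -/
def IsMuSeq (g : ℝ → ℝ) (μ : ℕ → ℕ → ℝ) : Prop :=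
  ∀ n, 1 ≤ n →
    (∀ k < 2 ^ (n - 1), μ n k < μ n (k + 1)) ∧
    ∀ x, x ∈ preimZero g n ↔ ∃ k ≤ 2 ^ (n - 1), μ n k = x

/-! The conjugacy `h` is an increasing piecewise linear homeomorphism, so it is affine with
positive slope on one-sided neighbourhoods of `0` and of `2/3`, the fixed points of the tent
map `f`, and `h (2/3) = x₀`. There `g = h ∘ f ∘ h⁻¹` is a composition of affine maps. At `0`
the slope of `h` cancels against that of `h⁻¹`, leaving `f'(0+) = 2`. Since `f` swaps the two
sides of `2/3`, the one-sided slopes of `g` at `x₀` are `-2 sᵣ / sₗ` and `-2 sₗ / sᵣ`, where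
`sₗ` and `sᵣ` are the slopes of `h` to the left and to the right of `2/3`. -/

theorem tent_of_le_half {x : ℝ} (hx : x ≤ 1 / 2) : tent x = 2 * x :=
  min_eq_left (by linarith)

theorem tent_of_half_le {x : ℝ} (hx : 1 / 2 ≤ x) : tent x = 2 - 2 * x :=
  min_eq_right (by linarith)

theorem tent_mapsTo : MapsTo tent (Icc 0 1) (Icc 0 1) := by
  intro x ⟨hx0, hx1⟩
  rcases le_total x (1 / 2) with hx | hx
  · rw [tent_of_le_half hx]; constructor <;> linarith
  · rw [tent_of_half_le hx]; constructor <;> linarith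

theorem eq_zero_or_eq_two_thirds_of_tent_eq_self {x : ℝ} (hx : tent x = x) :
    x = 0 ∨ x = 2 / 3 := by
  rcases min_choice (2 * x) (2 - 2 * x) with h | h
  · left; rw [tent, h] at hx; linarith
  · right; rw [tent, h] at hx; linarith

theorem IsPLOn.exists_affine_Icc_right {g : ℝ → ℝ} {a b t : ℝ} (hg : IsPLOn g a b)
    (ht : t ∈ Ico a b) : ∃ t' ∈ Ioc t b, ∃ c d : ℝ, ∀ x ∈ Icc t t', g x = c * x + d := by
  classical
  obtain ⟨n, p, hn, hp0, hpn, -, haff⟩ := hg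
  have hlast : t < p (n - 1 + 1) := by rw [Nat.sub_add_cancel hn, hpn]; exact ht.2
  have hex : ∃ i, t < p (i + 1) := ⟨n - 1, hlast⟩
  have hin : Nat.find hex < n := by have := Nat.find_min' hex hlast; omega
  have hpi : p (Nat.find hex) ≤ t := by
    rcases hi : Nat.find hex with _ | j
    · exact hp0 ▸ ht.1
    · exact not_lt.1 (Nat.find_min hex (by omega : j < Nat.find hex))
  obtain ⟨c, d, hcd⟩ := haff _ hin
  exact ⟨min (p (Nat.find hex + 1)) b, ⟨lt_min (Nat.find_spec hex) ht.2, min_le_right _ _⟩,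
    c, d, fun x hx => hcd x ⟨hpi.trans hx.1, hx.2.trans (min_le_left _ _)⟩⟩

theorem IsPLOn.exists_affine_Icc_left {g : ℝ → ℝ} {a b t : ℝ} (hg : IsPLOn g a b)
    (ht : t ∈ Ioc a b) : ∃ t' ∈ Ico a t, ∃ c d : ℝ, ∀ x ∈ Icc t' t, g x = c * x + d := by
  classical
  obtain ⟨n, p, hn, hp0, hpn, -, haff⟩ := hg
  have hlast : t ≤ p (n - 1 + 1) := by rw [Nat.sub_add_cancel hn, hpn]; exact ht.2
  have hex : ∃ i, t ≤ p (i + 1) := ⟨n - 1, hlast⟩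
  have hin : Nat.find hex < n := by have := Nat.find_min' hex hlast; omega
  have hpi : p (Nat.find hex) < t := by
    rcases hi : Nat.find hex with _ | j
    · exact hp0 ▸ ht.1
    · exact not_le.1 (Nat.find_min hex (by omega : j < Nat.find hex))
  obtain ⟨c, d, hcd⟩ := haff _ hin
  exact ⟨max (p (Nat.find hex)) a, ⟨le_max_right _ _, max_lt hpi ht.1⟩,
    c, d, fun x hx => hcd x ⟨(le_max_left _ _).trans hx.1, hx.2.trans (Nat.find_spec hex)⟩⟩

theorem StrictMonoOn.slope_pos_of_affine {h : ℝ → ℝ} {s : Set ℝ} {a b c d : ℝ}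
    (hmono : StrictMonoOn h s) (hab : a < b) (hsub : Icc a b ⊆ s)
    (heq : ∀ x ∈ Icc a b, h x = c * x + d) : 0 < c := by
  have := hmono (hsub ⟨le_rfl, hab.le⟩) (hsub ⟨hab.le, le_rfl⟩) hab
  rw [heq a ⟨le_rfl, hab.le⟩, heq b ⟨hab.le, le_rfl⟩] at this
  nlinarith

section AffineDeriv

variable {g : ℝ → ℝ} {a b c d : ℝ}

theorem hasDerivWithinAt_Ioi_of_affine_Icc (hab : a < b)
    (heq : ∀ x ∈ Icc a b, g x = c * x + d) : HasDerivWithinAt g c (Ioi a) a := by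
  have haff : HasDerivWithinAt (fun x => c * x + d) c (Icc a b) a := by
    simpa using (((hasDerivAt_id a).const_mul c).add_const d).hasDerivWithinAt
  exact (haff.congr heq (heq a ⟨le_rfl, hab.le⟩)).mono_of_mem_nhdsWithin (Icc_mem_nhdsGT hab)

theorem hasDerivWithinAt_Iio_of_affine_Icc (hab : a < b)
    (heq : ∀ x ∈ Icc a b, g x = c * x + d) : HasDerivWithinAt g c (Iio b) b := by
  have haff : HasDerivWithinAt (fun x => c * x + d) c (Icc a b) b := by
    simpa using (((hasDerivAt_id b).const_mul c).add_const d).hasDerivWithinAt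
  exact (haff.congr heq (heq b ⟨hab.le, le_rfl⟩)).mono_of_mem_nhdsWithin (Icc_mem_nhdsLT hab)

variable {s e : ℝ}

theorem affine_Icc_of_comp_affine (hs : 0 < s)
    (hcomp : ∀ u ∈ Icc a b, g (s * u + d) = c * u + e) :
    ∀ y ∈ Icc (s * a + d) (s * b + d), g y = c / s * y + (e - c / s * d) := by
  intro y ⟨hy1, hy2⟩
  have hu : (y - d) / s ∈ Icc a b :=
    ⟨(le_div_iff₀ hs).2 (by linarith), (div_le_iff₀ hs).2 (by linarith)⟩
  have hy : s * ((y - d) / s) + d = y := by field_simp; ring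
  rw [← hy, hcomp _ hu]
  field_simp
  ring

theorem hasDerivWithinAt_Ioi_of_comp_affine (hs : 0 < s) (hab : a < b)
    (hcomp : ∀ u ∈ Icc a b, g (s * u + d) = c * u + e) :
    HasDerivWithinAt g (c / s) (Ioi (s * a + d)) (s * a + d) :=
  hasDerivWithinAt_Ioi_of_affine_Icc (by gcongr) (affine_Icc_of_comp_affine hs hcomp)

theorem hasDerivWithinAt_Iio_of_comp_affine (hs : 0 < s) (hab : a < b)
    (hcomp : ∀ u ∈ Icc a b, g (s * u + d) = c * u + e) :
    HasDerivWithinAt g (c / s) (Iio (s * b + d)) (s * b + d) :=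
  hasDerivWithinAt_Iio_of_affine_Icc (by gcongr) (affine_Icc_of_comp_affine hs hcomp)

end AffineDeriv

namespace ConjTent

variable {g h : ℝ → ℝ}

theorem strictMonoOn (hh : ConjTent g h) : StrictMonoOn h (Icc 0 1) := by
  obtain ⟨⟨hcont, hbij⟩, h0, -⟩ := hh
  exact hcont.strictMonoOn_of_injOn_Icc zero_le_one
    (by rw [h0]; exact (hbij.mapsTo ⟨zero_le_one, le_rfl⟩).1) hbij.injOn

theorem apply_two_thirds (hh : ConjTent g h) {x₀ : ℝ} (hx₀ : x₀ ∈ Ioc 0 1)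
    (hfix : g x₀ = x₀) : h (2 / 3) = x₀ := by
  obtain ⟨⟨-, hbij⟩, h0, hconj⟩ := hh
  obtain ⟨x, hx, rfl⟩ := hbij.surjOn (Ioc_subset_Icc_self hx₀)
  have hfx : tent x = x := hbij.injOn (tent_mapsTo hx) hx (by rw [hconj x hx, hfix])
  rcases eq_zero_or_eq_two_thirds_of_tent_eq_self hfx with rfl | rfl
  · exact absurd h0 hx₀.1.ne'
  · rfl

theorem hasDerivWithinAt_Ioi_zero (hh : ConjTent g h) (hpl : IsPLOn h 0 1) :
    HasDerivWithinAt g 2 (Ioi 0) 0 := by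
  obtain ⟨b, ⟨hb0, hb1⟩, s, d, heq⟩ := hpl.exists_affine_Icc_right ⟨le_rfl, zero_lt_one⟩
  have hs : 0 < s := hh.strictMonoOn.slope_pos_of_affine hb0 (Icc_subset_Icc_right hb1) heq
  have hd : 0 = d := by simpa [hh.2.1] using heq 0 ⟨le_rfl, hb0.le⟩
  have hcomp : ∀ u ∈ Icc 0 (b / 2), g (s * u + d) = 2 * s * u + d := by
    intro u ⟨hu0, hu1⟩
    rw [← heq u ⟨hu0, by linarith⟩, ← hh.2.2 u ⟨hu0, by linarith⟩, tent_of_le_half (by linarith),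
      heq _ ⟨by linarith, by linarith⟩]
    ring
  simpa [← hd, hs.ne'] using hasDerivWithinAt_Ioi_of_comp_affine hs (half_pos hb0) hcomp

theorem exists_hasDerivWithinAt_two_thirds (hh : ConjTent g h) (hpl : IsPLOn h 0 1) :
    ∃ dl dr : ℝ, HasDerivWithinAt g dl (Iio (h (2 / 3))) (h (2 / 3)) ∧
      HasDerivWithinAt g dr (Ioi (h (2 / 3))) (h (2 / 3)) ∧ dl * dr = 4 := by
  obtain ⟨a, ⟨ha0, ha⟩, sl, el, hl⟩ := hpl.exists_affine_Icc_left (t := 2 / 3) (by norm_num)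
  obtain ⟨b, ⟨hb, hb1⟩, sr, er, hr⟩ := hpl.exists_affine_Icc_right (t := 2 / 3) (by norm_num)
  have hsl : 0 < sl := hh.strictMonoOn.slope_pos_of_affine ha (Icc_subset_Icc ha0 (by norm_num)) hl
  have hsr : 0 < sr := hh.strictMonoOn.slope_pos_of_affine hb (Icc_subset_Icc (by norm_num) hb1) hr
  have hcompl : ∀ u ∈ Icc (max a (1 - b / 2)) (2 / 3),
      g (sl * u + el) = -2 * sr * u + (2 * sr + er) := by
    intro u ⟨hu1, hu2⟩
    rw [max_le_iff] at hu1
    rw [← hl u ⟨hu1.1, hu2⟩, ← hh.2.2 u ⟨by linarith, by linarith⟩, tent_of_half_le (by linarith),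
      hr _ ⟨by linarith, by linarith⟩]
    ring
  have hcompr : ∀ u ∈ Icc (2 / 3) (min b (1 - a / 2)),
      g (sr * u + er) = -2 * sl * u + (2 * sl + el) := by
    intro u ⟨hu1, hu2⟩
    rw [le_min_iff] at hu2
    rw [← hr u ⟨hu1, hu2.1⟩, ← hh.2.2 u ⟨by linarith, by linarith⟩, tent_of_half_le (by linarith),
      hl _ ⟨by linarith, by linarith⟩]
    ring
  refine ⟨-2 * sr / sl, -2 * sl / sr, ?_, ?_, by field_simp; ring⟩
  · rw [hl _ ⟨ha.le, le_rfl⟩]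
    exact hasDerivWithinAt_Iio_of_comp_affine hsl (max_lt ha (by linarith)) hcompl
  · rw [hr _ ⟨le_rfl, hb.le⟩]
    exact hasDerivWithinAt_Ioi_of_comp_affine hsr (lt_min hb (by linarith)) hcompr

end ConjTent

theorem deriv_conditions_of_pl_conjugacy_general (g h : ℝ → ℝ)
    (hh : ConjTent g h) (hhpl : IsPLOn h 0 1)
    (x₀ : ℝ) (hx₀ : x₀ ∈ Ioo (0:ℝ) 1) (hfix : g x₀ = x₀) :
    HasDerivWithinAt g 2 (Ioi 0) 0 ∧
    ∃ dl dr : ℝ, HasDerivWithinAt g dl (Iio x₀) x₀ ∧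
      HasDerivWithinAt g dr (Ioi x₀) x₀ ∧ dl * dr = 4 := by
  refine ⟨hh.hasDerivWithinAt_Ioi_zero hhpl, ?_⟩
  rw [← hh.apply_two_thirds (Ioo_subset_Ioc_self hx₀) hfix]
  exact hh.exists_hasDerivWithinAt_two_thirds hhpl

/-- If a carcass map `g` is topologically conjugated to the tent map via a
piecewise linear conjugacy, and `x₀ ∈ (0,1)` is the positive fixed point of `g`, then
`g'(0+) = 2` and `g'(x₀−) · g'(x₀+) = 4`. -/
theorem deriv_conditions_of_pl_conjugacy (g h : ℝ → ℝ) (hg : IsCarcass g)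
    (hh : ConjTent g h) (hhpl : IsPLOn h 0 1)
    (x₀ : ℝ) (hx₀ : x₀ ∈ Ioo (0:ℝ) 1) (hfix : g x₀ = x₀) :
    HasDerivWithinAt g 2 (Ioi 0) 0 ∧
    ∃ dl dr : ℝ, HasDerivWithinAt g dl (Iio x₀) x₀ ∧
      HasDerivWithinAt g dr (Ioi x₀) x₀ ∧ dl * dr = 4 :=
  deriv_conditions_of_pl_conjugacy_general g h hh hhpl x₀ hx₀ hfix
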